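/- arXiv:2109.12728 — 4 statements merged into one kernel-verified Lean document; each statement's English description precedes it below -/
import Mathlib

section
/- Let X be a real-valued random variable with mean zero, and let X̄_N denote the average of N independent and identically distributed copies of X. If E[|X|^p] < ∞ for some p > 2, then there exists a constant C_p depending only on p such that E[|X̄_N|^p] ≤ C_p · E[|X|^p] / N^{p/2} for every N ≥ 1. -/
/-!
With `S n = X 0 + ⋯ + X (n - 1)` and `D = p² 2^p`, integrate the pointwise second-order bound
`|a + b|^p ≤ |a|^p + p |a|^(p-2) a b + D (|a|^(p-2) b² + |b|^p)` at `a = S n`, `b = X n`.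
Independence and `E[X n] = 0` kill the linear term and factorise the quadratic one, and Lyapunov's
inequality then gives the recursion
`E|S (n+1)|^p ≤ E|S n|^p + D ((E|S n|^p)^((p-2)/p) (E|X 0|^p)^(2/p) + E|X 0|^p)`,
whose solutions grow at most like `(4D)^(p/2) n^(p/2) E|X 0|^p`. Dividing by `N^p` gives the claim.
-/

open MeasureTheory ProbabilityTheory

lemma rpow_add_mul_sub_le_rpow {x y q : ℝ} (hx : 0 < x) (hy : 0 ≤ y) (hq : 1 ≤ q) :
    x ^ q + q * x ^ (q - 1) * (y - x) ≤ y ^ q := by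
  have hbernoulli := one_add_mul_self_le_rpow_one_add
    (show -1 ≤ (y - x) / x by rw [le_div_iff₀ hx]; linarith) hq
  have hratio : 1 + (y - x) / x = y / x := by field_simp; ring
  calc x ^ q + q * x ^ (q - 1) * (y - x) = x ^ q * (1 + q * ((y - x) / x)) := by
        rw [Real.rpow_sub_one hx.ne']; field_simp
    _ ≤ x ^ q * (y / x) ^ q := by
        rw [← hratio]; exact mul_le_mul_of_nonneg_left hbernoulli (by positivity)
    _ = y ^ q := by rw [← Real.mul_rpow hx.le (by positivity), mul_div_cancel₀ _ hx.ne']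

lemma abs_rpow_eq_abs_rpow_sub_two_mul_sq {p : ℝ} (hp : p ≠ 0) (a : ℝ) :
    |a| ^ p = |a| ^ (p - 2) * a ^ 2 := by
  rw [← sq_abs, ← Real.rpow_natCast, ← Real.rpow_add' (abs_nonneg a) (by simpa using hp)]
  norm_num

lemma abs_one_add_rpow_le_of_abs_le_one {p t : ℝ} (hp : 2 ≤ p) (ht : |t| ≤ 1) :
    |1 + t| ^ p ≤ 1 + p * t + p * (p - 1) * 2 ^ p * t ^ 2 := by
  obtain ⟨ht₁, ht₂⟩ := abs_le.mp ht
  have h2p : (1 : ℝ) ≤ 2 ^ p := Real.one_le_rpow (by norm_num) (by linarith)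
  rcases ht₁.eq_or_lt with rfl | ht₁
  · rw [add_neg_cancel, abs_zero, Real.zero_rpow (by linarith)]
    nlinarith [mul_le_mul_of_nonneg_left h2p (by nlinarith : 0 ≤ p * (p - 1))]
  have hpos : 0 < 1 + t := by linarith
  rw [abs_of_pos hpos]
  have htangent := rpow_add_mul_sub_le_rpow hpos zero_le_one (by linarith : (1 : ℝ) ≤ p)
  have hmid : t * (1 + t) ^ (p - 1) ≤ t + (p - 1) * 2 ^ p * t ^ 2 := by
    rcases le_or_gt 0 t with h0 | h0
    · have htangent' := rpow_add_mul_sub_le_rpow hpos zero_le_one (by linarith : (1 : ℝ) ≤ p - 1)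
      rw [Real.one_rpow] at htangent'
      have hbound : (1 + t) ^ (p - 1 - 1) ≤ 2 ^ p :=
        calc (1 + t) ^ (p - 1 - 1) ≤ 2 ^ (p - 1 - 1) :=
              Real.rpow_le_rpow hpos.le (by linarith) (by linarith)
          _ ≤ 2 ^ p := Real.rpow_le_rpow_of_exponent_le (by norm_num) (by linarith)
      have hcoeff : (p - 1) * (1 + t) ^ (p - 1 - 1) * t ≤ (p - 1) * 2 ^ p * t := by
        gcongr; linarith
      nlinarith
    · have hbernoulli := one_add_mul_self_le_rpow_one_add ht₁.le (by linarith : (1 : ℝ) ≤ p - 1)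
      have hcoeff : (p - 1) * t ^ 2 ≤ (p - 1) * 2 ^ p * t ^ 2 := by
        nlinarith [mul_le_mul_of_nonneg_left h2p
          (mul_nonneg (by linarith : 0 ≤ p - 1) (sq_nonneg t))]
      nlinarith [mul_le_mul_of_nonpos_left hbernoulli h0.le]
  rw [Real.one_rpow] at htangent
  nlinarith [mul_le_mul_of_nonneg_left hmid (by linarith : 0 ≤ p)]

lemma abs_one_add_rpow_le_of_one_le_abs {p t : ℝ} (hp : 1 ≤ p) (ht : 1 ≤ |t|) :
    |1 + t| ^ p ≤ 1 + p * t + (2 ^ p + p) * |t| ^ p := by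
  have hdouble : |1 + t| ^ p ≤ 2 ^ p * |t| ^ p := by
    rw [← Real.mul_rpow zero_le_two (abs_nonneg t)]
    gcongr
    linarith [abs_add_le 1 t, abs_one (α := ℝ)]
  have hlin : |t| ≤ |t| ^ p := by
    simpa using Real.rpow_le_rpow_of_exponent_le ht hp
  nlinarith [neg_abs_le t]

lemma abs_one_add_rpow_le {p : ℝ} (hp : 2 ≤ p) (t : ℝ) :
    |1 + t| ^ p ≤ 1 + p * t + p ^ 2 * 2 ^ p * (t ^ 2 + |t| ^ p) := by
  have h2p : (1 : ℝ) ≤ 2 ^ p := Real.one_le_rpow (by norm_num) (by linarith)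
  have htp : 0 ≤ |t| ^ p := by positivity
  rcases le_total |t| 1 with ht | ht
  · have hcoeff : p * (p - 1) * 2 ^ p * t ^ 2 ≤ p ^ 2 * 2 ^ p * t ^ 2 := by gcongr; nlinarith
    nlinarith [abs_one_add_rpow_le_of_abs_le_one hp ht, sq_nonneg t,
      mul_nonneg (by positivity : (0 : ℝ) ≤ p ^ 2 * 2 ^ p) htp]
  · have hcoeff : (2 ^ p + p) * |t| ^ p ≤ p ^ 2 * 2 ^ p * |t| ^ p := by
      gcongr; nlinarith [mul_le_mul_of_nonneg_left h2p (by nlinarith : 0 ≤ p ^ 2 - 1)]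
    nlinarith [abs_one_add_rpow_le_of_one_le_abs (by linarith : (1 : ℝ) ≤ p) ht,
      mul_nonneg (by positivity : (0 : ℝ) ≤ p ^ 2 * 2 ^ p) (sq_nonneg t)]

lemma abs_add_rpow_le {p : ℝ} (hp : 2 < p) (a b : ℝ) :
    |a + b| ^ p ≤ |a| ^ p + p * (|a| ^ (p - 2) * a) * b
      + p ^ 2 * 2 ^ p * (|a| ^ (p - 2) * b ^ 2 + |b| ^ p) := by
  rcases eq_or_ne a 0 with rfl | ha
  · simp only [zero_add, abs_zero, Real.zero_rpow (by linarith : p ≠ 0),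
      Real.zero_rpow (by linarith : p - 2 ≠ 0), mul_zero, zero_mul, add_zero]
    refine le_mul_of_one_le_left (by positivity) (one_le_mul_of_one_le_of_one_le (by nlinarith) ?_)
    exact Real.one_le_rpow (by norm_num) (by linarith)
  have hsplit := abs_rpow_eq_abs_rpow_sub_two_mul_sq (by linarith) a
  calc |a + b| ^ p = |a| ^ p * |1 + b / a| ^ p := by
        rw [← Real.mul_rpow (abs_nonneg _) (abs_nonneg _), ← abs_mul, mul_add, mul_div_cancel₀ _ ha,
          mul_one]
    _ ≤ |a| ^ p * (1 + p * (b / a) + p ^ 2 * 2 ^ p * ((b / a) ^ 2 + |b / a| ^ p)) :=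
        mul_le_mul_of_nonneg_left (abs_one_add_rpow_le hp.le _) (by positivity)
    _ = |a| ^ p + p * (|a| ^ (p - 2) * a) * b
          + p ^ 2 * 2 ^ p * (|a| ^ (p - 2) * b ^ 2 + |b| ^ p) := by
        rw [abs_div, Real.div_rpow (abs_nonneg _) (abs_nonneg _), hsplit]
        field_simp

lemma rpow_mul_rpow_add_le_rpow_mul_add_one_rpow {c q x : ℝ} (hc : 1 ≤ c) (hq : 1 ≤ q)
    (hx : 1 ≤ x) :
    c ^ q * x ^ q + c / 4 * (c ^ (q - 1) * x ^ (q - 1) + 1) ≤ c ^ q * (x + 1) ^ q := by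
  have htangent := rpow_add_mul_sub_le_rpow (by linarith : 0 < x) (by linarith : 0 ≤ x + 1) hq
  rw [add_sub_cancel_left, mul_one] at htangent
  have hcq : c ^ q = c * c ^ (q - 1) := by
    rw [← Real.rpow_one_add' (by linarith) (by linarith), add_sub_cancel]
  have hc1 : 1 ≤ c ^ (q - 1) := Real.one_le_rpow hc (by linarith)
  have hx1 : 1 ≤ x ^ (q - 1) := Real.one_le_rpow hx (by linarith)
  have hcx : c ≤ c ^ q * x ^ (q - 1) := by
    rw [hcq, mul_assoc]
    exact le_mul_of_one_le_right (by linarith) (one_le_mul_of_one_le_of_one_le hc1 hx1)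
  nlinarith [mul_le_mul_of_nonneg_left htangent (Real.rpow_nonneg (by linarith) q : 0 ≤ c ^ q),
    mul_le_mul_of_nonneg_right hq (by linarith : 0 ≤ c ^ q * x ^ (q - 1))]

lemma le_of_moment_recursion {p D m : ℝ} (hp : 2 ≤ p) (hD : 1 ≤ D) (hm : 0 ≤ m) {A : ℕ → ℝ}
    (hA : ∀ n, 0 ≤ A n) (hA1 : A 1 ≤ m)
    (hstep : ∀ n, 1 ≤ n → A (n + 1) ≤ A n + D * (A n ^ ((p - 2) / p) * m ^ (2 / p) + m)) :
    ∀ n, 1 ≤ n → A n ≤ (4 * D) ^ (p / 2) * (n : ℝ) ^ (p / 2) * m := by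
  have hc : 1 ≤ 4 * D := by linarith
  have hq : 1 ≤ p / 2 := by linarith
  refine Nat.le_induction ?_ fun n hn ih => ?_
  · simpa using hA1.trans (le_mul_of_one_le_left hm (Real.one_le_rpow hc (by linarith)))
  have hsum : (p - 2) / p + 2 / p = 1 := by field_simp; ring
  have hexp : p / 2 * ((p - 2) / p) = p / 2 - 1 := by field_simp
  have hpow : A n ^ ((p - 2) / p) * m ^ (2 / p)
      ≤ (4 * D) ^ (p / 2 - 1) * (n : ℝ) ^ (p / 2 - 1) * m :=
    calc A n ^ ((p - 2) / p) * m ^ (2 / p)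
        ≤ ((4 * D) ^ (p / 2) * (n : ℝ) ^ (p / 2) * m) ^ ((p - 2) / p) * m ^ (2 / p) := by
          gcongr
          exact hA n
      _ = (4 * D) ^ (p / 2 - 1) * (n : ℝ) ^ (p / 2 - 1) * m := by
          rw [Real.mul_rpow (by positivity) hm, Real.mul_rpow (by positivity) (by positivity),
            ← Real.rpow_mul (by positivity), ← Real.rpow_mul (by positivity), mul_assoc,
            ← Real.rpow_add' hm (by rw [hsum]; norm_num), hsum, Real.rpow_one, hexp]
  push_cast
  calc A (n + 1) ≤ A n + D * (A n ^ ((p - 2) / p) * m ^ (2 / p) + m) := hstep n hn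
    _ ≤ (4 * D) ^ (p / 2) * (n : ℝ) ^ (p / 2) * m
          + D * ((4 * D) ^ (p / 2 - 1) * (n : ℝ) ^ (p / 2 - 1) * m + m) := by gcongr
    _ = ((4 * D) ^ (p / 2) * (n : ℝ) ^ (p / 2)
          + 4 * D / 4 * ((4 * D) ^ (p / 2 - 1) * (n : ℝ) ^ (p / 2 - 1) + 1)) * m := by ring
    _ ≤ (4 * D) ^ (p / 2) * ((n : ℝ) + 1) ^ (p / 2) * m :=
          mul_le_mul_of_nonneg_right
            (rpow_mul_rpow_add_le_rpow_mul_add_one_rpow hc hq (by exact_mod_cast hn)) hm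

section Moments

variable {Ω : Type*} [MeasurableSpace Ω] {μ : Measure Ω}

lemma MeasureTheory.MemLp.integrable_abs_rpow [IsFiniteMeasure μ] {f : Ω → ℝ} {p r : ℝ}
    (hf : MemLp f (ENNReal.ofReal p) μ) (hr : 0 < r) (hrp : r ≤ p) :
    Integrable (fun ω => |f ω| ^ r) μ := by
  have h := (hf.mono_exponent (ENNReal.ofReal_le_ofReal hrp)).integrable_norm_rpow
    (ENNReal.ofReal_pos.mpr hr).ne' ENNReal.ofReal_ne_top
  simpa [ENNReal.toReal_ofReal hr.le, Real.norm_eq_abs] using h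

lemma integral_abs_rpow_le_rpow_integral [IsProbabilityMeasure μ] {f : Ω → ℝ} {r q : ℝ}
    (hr : 0 < r) (hrq : r ≤ q) (hf : MemLp f (ENNReal.ofReal q) μ) :
    ∫ ω, |f ω| ^ r ∂μ ≤ (∫ ω, |f ω| ^ q ∂μ) ^ (r / q) := by
  have hq : 0 < q := hr.trans_le hrq
  have hcomp : ∀ ω, (|f ω| ^ q) ^ (r / q) = |f ω| ^ r := fun ω => by
    rw [← Real.rpow_mul (abs_nonneg _), mul_div_cancel₀ _ hq.ne']
  have hjensen := (Real.concaveOn_rpow (by positivity) ((div_le_one hq).mpr hrq)).le_map_integral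
    (Real.continuous_rpow_const (by positivity)).continuousOn isClosed_Ici
    (ae_of_all μ fun ω => Set.mem_Ici.mpr (by positivity)) (hf.integrable_abs_rpow hq le_rfl)
    (by simpa [Function.comp_def, hcomp] using hf.integrable_abs_rpow hr hrq)
  simpa only [hcomp] using hjensen

lemma ProbabilityTheory.IndepFun.integral_abs_add_rpow_le [IsProbabilityMeasure μ] {p : ℝ}
    (hp : 2 < p) {S Y : Ω → ℝ}
    (hind : IndepFun S Y μ) (hS : MemLp S (ENNReal.ofReal p) μ) (hY : MemLp Y (ENNReal.ofReal p) μ)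
    (hY0 : ∫ ω, Y ω ∂μ = 0) :
    ∫ ω, |S ω + Y ω| ^ p ∂μ ≤ ∫ ω, |S ω| ^ p ∂μ
      + p ^ 2 * 2 ^ p * ((∫ ω, |S ω| ^ (p - 2) ∂μ) * (∫ ω, Y ω ^ 2 ∂μ) + ∫ ω, |Y ω| ^ p ∂μ) := by
  have hY2 : MemLp Y 2 μ := hY.mono_exponent (by simpa using ENNReal.ofReal_le_ofReal hp.le)
  have hYint : Integrable Y μ := hY2.integrable one_le_two
  have hSp := hS.integrable_abs_rpow (by linarith) le_rfl
  have hSp2 := hS.integrable_abs_rpow (by linarith : 0 < p - 2) (by linarith)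
  have hYp := hY.integrable_abs_rpow (by linarith) le_rfl
  have hg : Measurable fun x : ℝ => |x| ^ (p - 2) * x := by fun_prop
  have hgS : Integrable (fun ω => |S ω| ^ (p - 2) * S ω) μ := by
    refine (hS.integrable_abs_rpow (by linarith : 0 < p - 1) (by linarith)).mono'
      (hg.comp_aemeasurable hS.1.aemeasurable).aestronglyMeasurable (ae_of_all μ fun ω => ?_)
    rw [Real.norm_eq_abs, abs_mul, abs_of_nonneg (by positivity), show p - 1 = p - 2 + 1 by ring,
      Real.rpow_add_one' (abs_nonneg _) (by linarith)]
  have hind₁ : IndepFun (fun ω => |S ω| ^ (p - 2) * S ω) Y μ :=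
    hind.comp (φ := fun x => |x| ^ (p - 2) * x) (ψ := id) hg measurable_id
  have hind₂ : IndepFun (fun ω => |S ω| ^ (p - 2)) (fun ω => Y ω ^ 2) μ :=
    hind.comp (φ := fun x => |x| ^ (p - 2)) (ψ := fun y => y ^ 2) (by fun_prop) (by fun_prop)
  have hlin : Integrable (fun ω => |S ω| ^ (p - 2) * S ω * Y ω) μ := hind₁.integrable_mul hgS hYint
  have hquad : Integrable (fun ω => |S ω| ^ (p - 2) * Y ω ^ 2) μ :=
    hind₂.integrable_mul hSp2 hY2.integrable_sq
  have hlin_zero : ∫ ω, |S ω| ^ (p - 2) * S ω * Y ω ∂μ = 0 := by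
    rw [hind₁.integral_fun_mul_eq_mul_integral hgS.1 hYint.1, hY0, mul_zero]
  have hquad_eq : ∫ ω, |S ω| ^ (p - 2) * Y ω ^ 2 ∂μ
      = (∫ ω, |S ω| ^ (p - 2) ∂μ) * ∫ ω, Y ω ^ 2 ∂μ :=
    hind₂.integral_fun_mul_eq_mul_integral hSp2.1 hY2.integrable_sq.1
  calc ∫ ω, |S ω + Y ω| ^ p ∂μ
      ≤ ∫ ω, |S ω| ^ p + p * (|S ω| ^ (p - 2) * S ω * Y ω)
          + p ^ 2 * 2 ^ p * (|S ω| ^ (p - 2) * Y ω ^ 2 + |Y ω| ^ p) ∂μ := by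
        refine integral_mono ((hS.add hY).integrable_abs_rpow (by linarith) le_rfl)
          ((hSp.add (hlin.const_mul p)).add ((hquad.add hYp).const_mul _)) fun ω => ?_
        simpa only [mul_assoc] using abs_add_rpow_le hp (S ω) (Y ω)
    _ = ∫ ω, |S ω| ^ p ∂μ + p ^ 2 * 2 ^ p
          * ((∫ ω, |S ω| ^ (p - 2) ∂μ) * (∫ ω, Y ω ^ 2 ∂μ) + ∫ ω, |Y ω| ^ p ∂μ) := by
        rw [integral_add, integral_add, integral_const_mul, integral_const_mul, integral_add,
          hlin_zero, hquad_eq, mul_zero, add_zero]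
        exacts [hquad, hYp, hSp, hlin.const_mul p, hSp.add (hlin.const_mul p),
          (hquad.add hYp).const_mul _]

lemma integral_abs_sum_rpow_le [IsProbabilityMeasure μ] {p : ℝ} (hp : 2 < p) {X : ℕ → Ω → ℝ}
    (hXm : ∀ i, Measurable (X i))
    (hindep : iIndepFun X μ) (hid : ∀ i, IdentDistrib (X i) (X 0) μ μ)
    (hmean : ∫ ω, X 0 ω ∂μ = 0) (hX0 : MemLp (X 0) (ENNReal.ofReal p) μ) :
    ∀ n, 1 ≤ n → ∫ ω, |∑ i ∈ Finset.range n, X i ω| ^ p ∂μ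
      ≤ (4 * (p ^ 2 * 2 ^ p)) ^ (p / 2) * (n : ℝ) ^ (p / 2) * ∫ ω, |X 0 ω| ^ p ∂μ := by
  have hXp : ∀ i, MemLp (X i) (ENNReal.ofReal p) μ := fun i => (hid i).memLp_iff.mpr hX0
  have hmoment : ∀ i, ∫ ω, |X i ω| ^ p ∂μ = ∫ ω, |X 0 ω| ^ p ∂μ := fun i => by
    simpa [Function.comp_def] using
      ((hid i).comp (by fun_prop : Measurable fun x : ℝ => |x| ^ p)).integral_eq
  have hD : 1 ≤ p ^ 2 * 2 ^ p :=
    one_le_mul_of_one_le_of_one_le (by nlinarith) (Real.one_le_rpow (by norm_num) (by linarith))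
  refine le_of_moment_recursion hp.le hD (by positivity) (fun n => by positivity) (by simp)
    fun n _ => ?_
  have hS : MemLp (fun ω => ∑ i ∈ Finset.range n, X i ω) (ENNReal.ofReal p) μ :=
    memLp_finsetSum _ fun i _ => hXp i
  have hind : IndepFun (fun ω => ∑ i ∈ Finset.range n, X i ω) (X n) μ := by
    simpa only [← Finset.sum_apply] using
      hindep.indepFun_finsetSum_of_notMem hXm Finset.notMem_range_self
  have hsecond : ∫ ω, X n ω ^ 2 ∂μ ≤ (∫ ω, |X 0 ω| ^ p ∂μ) ^ (2 / p) := by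
    simpa [← hmoment n, Real.rpow_two] using
      integral_abs_rpow_le_rpow_integral two_pos hp.le (hXp n)
  simp_rw [Finset.sum_range_succ]
  calc _ ≤ _ := hind.integral_abs_add_rpow_le hp hS (hXp n) ((hid n).integral_eq.trans hmean)
    _ ≤ _ := by
      rw [hmoment n]
      gcongr
      exact integral_abs_rpow_le_rpow_integral (by linarith) (by linarith) hS

end Moments

/-- Marcinkiewicz–Zygmund-type bound: if `X` has mean zero and
`E[|X|^p] < ∞` for some `p > 2`, then there is a constant `C_p` depending
only on `p` such that for the average `X̄_N` of `N` iid copies of `X`,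
`E[|X̄_N|^p] ≤ C_p · E[|X|^p] / N^{p/2}` for every `N ≥ 1`. -/
theorem stmt_0 (p : ℝ) (hp : 2 < p) :
    ∃ C : ℝ, 0 < C ∧
      ∀ (Ω : Type) (_ : MeasurableSpace Ω) (μ : Measure Ω), IsProbabilityMeasure μ →
        ∀ X : ℕ → Ω → ℝ, (∀ i, Measurable (X i)) →
          iIndepFun X μ →
          (∀ i, IdentDistrib (X i) (X 0) μ μ) →
          (∫ ω, X 0 ω ∂μ = 0) →
          Integrable (fun ω => |X 0 ω| ^ p) μ →
          ∀ N : ℕ, 1 ≤ N →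
            ∫ ω, |(N : ℝ)⁻¹ * ∑ i ∈ Finset.range N, X i ω| ^ p ∂μ
              ≤ C * (∫ ω, |X 0 ω| ^ p ∂μ) / (N : ℝ) ^ (p / 2) := by
  refine ⟨(4 * (p ^ 2 * 2 ^ p)) ^ (p / 2), by positivity, ?_⟩
  intro Ω _ μ _ X hXm hindep hid hmean hint N hN
  have hX0 : MemLp (X 0) (ENNReal.ofReal p) μ := by
    refine (integrable_norm_rpow_iff (hXm 0).aestronglyMeasurable
      (ENNReal.ofReal_pos.mpr (by linarith)).ne'
      ENNReal.ofReal_ne_top).mp ?_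
    simpa [ENNReal.toReal_ofReal (by linarith : 0 ≤ p)] using hint
  have hN' : (0 : ℝ) < N := by exact_mod_cast hN
  have hscale : ∀ ω, |(N : ℝ)⁻¹ * ∑ i ∈ Finset.range N, X i ω| ^ p
      = ((N : ℝ) ^ p)⁻¹ * |∑ i ∈ Finset.range N, X i ω| ^ p := fun ω => by
    rw [abs_mul, abs_inv, Nat.abs_cast, Real.mul_rpow (by positivity) (abs_nonneg _),
      Real.inv_rpow hN'.le]
  have hsplit : (N : ℝ) ^ p = (N : ℝ) ^ (p / 2) * (N : ℝ) ^ (p / 2) := by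
    rw [← Real.rpow_add hN', add_halves]
  simp_rw [hscale, integral_const_mul]
  calc _ ≤ ((N : ℝ) ^ p)⁻¹ * ((4 * (p ^ 2 * 2 ^ p)) ^ (p / 2) * (N : ℝ) ^ (p / 2)
          * ∫ ω, |X 0 ω| ^ p ∂μ) := by
        gcongr
        exact integral_abs_sum_rpow_le hp hXm hindep hid hmean hX0 N hN
    _ = _ := by
        rw [hsplit]
        field_simp
end

section
/- For every real x > 0 and every r with 1 < r ≤ 2, the inequality |log x − x + 1| ≤ |x − 1|^r · max(−log x, 1) holds. -/
/-!
Put `g x = x - 1 - log x ≥ 0`. The heart of the matter is the case `r = 2`,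
`g x ≤ (x - 1)² · max (-log x) 1`. For `x ≥ 1` it follows from `log x ≥ 1 - 1/x`. For
`e⁻¹ ≤ x ≤ 1` it reads `g x ≤ (x - 1)²` and for `x ≤ e⁻¹` it reads `g x ≤ -(x - 1)² log x`;
each amounts to the nonnegativity of an explicit function that is monotone between `e⁻¹` and a
point where it is visibly nonnegative, its value at `e⁻¹` being `e⁻² - 3e⁻¹ + 1 > 0` in both
cases. When `|x - 1| ≤ 1` this gives the claim since `|x - 1|² ≤ |x - 1|ʳ`; when `|x - 1| ≥ 1`
we have `x ≥ 2`, where `g x ≤ x - 1 ≤ (x - 1)ʳ`.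
-/

open Real Set

lemma monotoneOn_Icc_of_hasDerivAt_nonneg {f f' : ℝ → ℝ} {a b : ℝ}
    (hf : ∀ x ∈ Icc a b, HasDerivAt f (f' x) x) (hf' : ∀ x ∈ Ioo a b, 0 ≤ f' x) :
    MonotoneOn f (Icc a b) :=
  monotoneOn_of_hasDerivWithinAt_nonneg (convex_Icc a b)
    (fun x hx ↦ (hf x hx).continuousAt.continuousWithinAt)
    (fun x hx ↦ (hf x (interior_subset hx)).hasDerivWithinAt)
    (fun x hx ↦ hf' x (by rwa [interior_Icc] at hx))

lemma antitoneOn_Icc_of_hasDerivAt_nonpos {f f' : ℝ → ℝ} {a b : ℝ}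
    (hf : ∀ x ∈ Icc a b, HasDerivAt f (f' x) x) (hf' : ∀ x ∈ Ioo a b, f' x ≤ 0) :
    AntitoneOn f (Icc a b) :=
  antitoneOn_of_hasDerivWithinAt_nonpos (convex_Icc a b)
    (fun x hx ↦ (hf x hx).continuousAt.continuousWithinAt)
    (fun x hx ↦ (hf x (interior_subset hx)).hasDerivWithinAt)
    (fun x hx ↦ hf' x (by rwa [interior_Icc] at hx))

lemma exp_neg_one_sq_sub_three_mul_add_one_pos : 0 < exp (-1) ^ 2 - 3 * exp (-1) + 1 := by
  nlinarith [exp_neg_one_lt_d9, exp_neg_one_gt_d9]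

lemma log_add_one_sub_mul_two_sub_nonneg {x : ℝ} (hx : exp (-1) ≤ x) (hx1 : x ≤ 1) :
    0 ≤ log x + (1 - x) * (2 - x) := by
  set f : ℝ → ℝ := fun y ↦ log y + (1 - y) * (2 - y)
  have hderiv (y : ℝ) (hy : exp (-1) ≤ y) : HasDerivAt f ((2 * y - 1) * (y - 1) / y) y := by
    have hy0 : y ≠ 0 := ((exp_pos _).trans_le hy).ne'
    refine ((hasDerivAt_log hy0).add (((hasDerivAt_id' y).const_sub 1).mul
      ((hasDerivAt_id' y).const_sub 2))).congr_deriv ?_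
    field_simp
    ring
  have hE : exp (-1) < 1 / 2 := exp_neg_one_lt_d9.trans (by norm_num)
  rcases le_total x (1 / 2) with hx2 | hx2
  · have hmono : MonotoneOn f (Icc (exp (-1)) (1 / 2)) :=
      monotoneOn_Icc_of_hasDerivAt_nonneg (fun y hy ↦ hderiv y hy.1) fun y hy ↦
        div_nonneg (mul_nonneg_of_nonpos_of_nonpos (by linarith [hy.2]) (by linarith [hy.2]))
          ((exp_pos _).trans hy.1).le
    have hfE : 0 ≤ f (exp (-1)) := by
      simp only [f, log_exp]
      nlinarith [exp_neg_one_sq_sub_three_mul_add_one_pos]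
    exact hfE.trans (hmono ⟨le_rfl, hE.le⟩ ⟨hx, hx2⟩ hx)
  · have hanti : AntitoneOn f (Icc (1 / 2) 1) :=
      antitoneOn_Icc_of_hasDerivAt_nonpos (fun y hy ↦ hderiv y (hE.le.trans hy.1)) fun y hy ↦
        div_nonpos_of_nonpos_of_nonneg
          (mul_nonpos_of_nonneg_of_nonpos (by linarith [hy.1]) (by linarith [hy.2]))
          (by linarith [hy.1])
    simpa [f] using hanti ⟨hx2, hx1⟩ ⟨by norm_num, le_rfl⟩ hx1

lemma one_sub_add_log_mul_two_mul_sub_sq_nonneg {x : ℝ} (hx : 0 < x) (hxE : x ≤ exp (-1)) :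
    0 ≤ 1 - x + log x * (2 * x - x ^ 2) := by
  set f : ℝ → ℝ := fun y ↦ 1 - y + log y * (2 * y - y ^ 2)
  have hanti : AntitoneOn f (Icc x (exp (-1))) := by
    refine antitoneOn_Icc_of_hasDerivAt_nonpos (f' := fun y ↦ (1 - y) * (1 + 2 * log y))
      (fun y hy ↦ ?_) fun y hy ↦ ?_
    · have hy0 : y ≠ 0 := (hx.trans_le hy.1).ne'
      refine (((hasDerivAt_id' y).const_sub 1).add ((hasDerivAt_log hy0).mul
        (((hasDerivAt_id' y).const_mul 2).sub (hasDerivAt_pow 2 y)))).congr_deriv ?_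
      simp only [Pi.sub_apply]
      field_simp
      ring
    · have hlog : log y ≤ -1 := by
        rw [← log_exp (-1)]
        exact log_le_log (hx.trans hy.1) hy.2.le
      have hy1 : y < 1 := hy.2.trans (exp_neg_one_lt_d9.trans (by norm_num))
      exact mul_nonpos_of_nonneg_of_nonpos (by linarith) (by linarith)
  have hfE : 0 ≤ f (exp (-1)) := by
    simp only [f, log_exp]
    nlinarith [exp_neg_one_sq_sub_three_mul_add_one_pos]
  exact hfE.trans (hanti ⟨le_rfl, hxE⟩ ⟨hxE, le_rfl⟩ hxE)

lemma sub_one_sub_log_le_sq {x : ℝ} (hx : exp (-1) ≤ x) : x - 1 - log x ≤ (x - 1) ^ 2 := by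
  rcases le_total x 1 with hx1 | hx1
  · nlinarith [log_add_one_sub_mul_two_sub_nonneg hx hx1]
  · have hx0 : 0 < x := by linarith
    have hlog := one_sub_inv_le_log_of_pos hx0
    have hsq : x - 2 + x⁻¹ = (x - 1) ^ 2 / x := by
      field_simp
      ring
    linarith [div_le_self (sq_nonneg (x - 1)) hx1]

lemma sub_one_sub_log_le_sq_mul_max {x : ℝ} (hx : 0 < x) :
    x - 1 - log x ≤ (x - 1) ^ 2 * max (-log x) 1 := by
  rcases le_total x (exp (-1)) with hxE | hxE
  · have hlog : 1 ≤ -log x := by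
      rw [le_neg, ← log_exp (-1)]
      exact log_le_log hx hxE
    rw [max_eq_left hlog]
    nlinarith [one_sub_add_log_mul_two_mul_sub_sq_nonneg hx hxE]
  · calc x - 1 - log x ≤ (x - 1) ^ 2 := sub_one_sub_log_le_sq hxE
      _ ≤ (x - 1) ^ 2 * max (-log x) 1 :=
        le_mul_of_one_le_right (sq_nonneg _) (le_max_right _ _)

/-- For every real `x > 0` and every `r` with `1 < r ≤ 2`,
`|log x − x + 1| ≤ |x − 1|^r · max(−log x, 1)`. -/
theorem stmt_3 (x : ℝ) (hx : 0 < x) (r : ℝ) (hr1 : 1 < r) (hr2 : r ≤ 2) :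
    |Real.log x - x + 1| ≤ |x - 1| ^ r * max (-Real.log x) 1 := by
  have habs : |log x - x + 1| = x - 1 - log x := by
    rw [abs_of_nonpos (by linarith [log_le_sub_one_of_pos hx])]
    ring
  rw [habs]
  rcases le_total |x - 1| 1 with ht | ht
  · have hpow : |x - 1| ^ (2 : ℝ) ≤ |x - 1| ^ r :=
      rpow_le_rpow_of_exponent_ge' (abs_nonneg _) ht (by linarith) hr2
    rw [rpow_two, sq_abs] at hpow
    calc x - 1 - log x ≤ (x - 1) ^ 2 * max (-log x) 1 := sub_one_sub_log_le_sq_mul_max hx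
      _ ≤ |x - 1| ^ r * max (-log x) 1 :=
        mul_le_mul_of_nonneg_right hpow (zero_le_one.trans (le_max_right _ _))
  · have hx2 : 2 ≤ x := by
      rcases le_abs'.mp ht with h | h <;> linarith
    have hlog : 0 ≤ log x := log_nonneg (by linarith)
    rw [max_eq_right (by linarith), mul_one]
    calc x - 1 - log x ≤ |x - 1| := by linarith [le_abs_self (x - 1)]
      _ ≤ |x - 1| ^ r := self_le_rpow_of_one_le ht hr1.le
end

section
/- Let (Δ_ℓ)_{ℓ≥0} be a sequence of integrable real random variables with Σ_{ℓ=0}^∞ E[|Δ_ℓ|] < ∞, and let I be an ℕ-valued random variable independent of the sequence with P(I = ℓ) = w_ℓ, where each w_ℓ > 0 and Σ_{ℓ=0}^∞ w_ℓ = 1. Then the single-term randomized multilevel estimator Δ_I / w_I is integrable and E[Δ_I / w_I] = Σ_{ℓ=0}^∞ E[Δ_ℓ]. -/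
/-!
Split `Ω` into the events `{I = ℓ}`. On `{I = ℓ}` the estimator is `Δ_ℓ / w_ℓ`, and since `I` is
independent of `Δ_ℓ` and `P(I = ℓ) = w_ℓ`, its integral over that event is `E[Δ_ℓ]`; likewise its
absolute integral there is `E|Δ_ℓ|`. Summability of `E|Δ_ℓ|` gives integrability over the union of
the events, i.e. over `Ω`, and countable additivity of the integral gives `Σ_ℓ E[Δ_ℓ]`.
-/

open MeasureTheory ProbabilityTheory

theorem Set.iUnion_preimage_singleton {α β : Type*} (f : α → β) : ⋃ b, f ⁻¹' {b} = Set.univ := by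
  rw [← Set.preimage_iUnion, Set.iUnion_of_singleton, Set.preimage_univ]

theorem Set.eqOn_preimage_singleton {α β γ : Type*} (F : β → α → γ) (f : α → β) (b : β) :
    Set.EqOn (fun a => F (f a) a) (F b) (f ⁻¹' {b}) := by
  rintro a (rfl : f a = b)
  rfl

namespace ProbabilityTheory

variable {Ω β 𝓧 : Type*} [MeasurableSpace Ω] [MeasurableSpace β] [MeasurableSpace 𝓧]
  {μ : Measure Ω} {I : Ω → β} {X : Ω → 𝓧} {s : Set β} {f : 𝓧 → ℝ}

theorem IndepFun.setIntegral_preimage_eq_mul (hIX : IndepFun I X μ) (hI : Measurable I)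
    (hX : AEMeasurable X μ) (hs : MeasurableSet s) (hf : Measurable f) :
    ∫ ω in I ⁻¹' s, f (X ω) ∂μ = μ.real (I ⁻¹' s) * ∫ ω, f (X ω) ∂μ :=
  Indep.setIntegral_eq_mul hI.comap_le hIX hX ⟨s, hs, rfl⟩ hf.aestronglyMeasurable

theorem IndepFun.setIntegral_preimage_div_measureReal (hIX : IndepFun I X μ)
    (hI : Measurable I) (hX : AEMeasurable X μ) (hs : MeasurableSet s) (hf : Measurable f)
    (hpos : μ.real (I ⁻¹' s) ≠ 0) :
    ∫ ω in I ⁻¹' s, f (X ω) / μ.real (I ⁻¹' s) ∂μ = ∫ ω, f (X ω) ∂μ := by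
  rw [integral_div, hIX.setIntegral_preimage_eq_mul hI hX hs hf, mul_div_cancel_left₀ _ hpos]

end ProbabilityTheory

namespace MeasureTheory

variable {Ω β E : Type*} [MeasurableSpace Ω] [MeasurableSpace β] [MeasurableSingletonClass β]
  [Countable β] [NormedAddCommGroup E]
  {μ : Measure Ω} {I : Ω → β} {F : β → Ω → E}

theorem integrable_of_summable_integral_norm_preimage_singleton (hI : Measurable I)
    (hF : ∀ b, IntegrableOn (F b) (I ⁻¹' {b}) μ)
    (hsum : Summable fun b => ∫ ω in I ⁻¹' {b}, ‖F b ω‖ ∂μ) :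
    Integrable (fun ω => F (I ω) ω) μ := by
  have hS : ∀ b, MeasurableSet (I ⁻¹' {b}) := fun b => hI (measurableSet_singleton b)
  rw [← integrableOn_univ, ← Set.iUnion_preimage_singleton I]
  refine integrableOn_iUnion_of_summable_integral_norm
    (fun b => (hF b).congr_fun (Set.eqOn_preimage_singleton F I b).symm (hS b)) ?_
  refine hsum.congr fun b => setIntegral_congr_fun (hS b) fun ω hω => ?_
  simp only [Set.eqOn_preimage_singleton F I b hω]

theorem integral_eq_tsum_setIntegral_preimage_singleton [NormedSpace ℝ E] (hI : Measurable I)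
    (hint : Integrable (fun ω => F (I ω) ω) μ) :
    ∫ ω, F (I ω) ω ∂μ = ∑' b, ∫ ω in I ⁻¹' {b}, F b ω ∂μ := by
  have hS : ∀ b, MeasurableSet (I ⁻¹' {b}) := fun b => hI (measurableSet_singleton b)
  rw [← setIntegral_univ, ← Set.iUnion_preimage_singleton I,
    integral_iUnion hS (pairwise_disjoint_fiber I) hint.integrableOn]
  exact tsum_congr fun b => setIntegral_congr_fun (hS b) (Set.eqOn_preimage_singleton F I b)

end MeasureTheory

theorem stmt_10_general {Ω : Type*} [MeasurableSpace Ω] (μ : Measure Ω)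
    (Δ : ℕ → Ω → ℝ)
    (I : Ω → ℕ) (hI_meas : Measurable I)
    (hindep : IndepFun I (fun ω ℓ => Δ ℓ ω) μ)
    (w : ℕ → ℝ) (hw_pos : ∀ ℓ, 0 < w ℓ)
    (hI_law : ∀ ℓ, μ (I ⁻¹' {ℓ}) = ENNReal.ofReal (w ℓ))
    (hΔ_int : ∀ ℓ, Integrable (Δ ℓ) μ)
    (hsum : Summable fun ℓ => ∫ ω, |Δ ℓ ω| ∂μ) :
    Integrable (fun ω => Δ (I ω) ω / w (I ω)) μ ∧
    ∫ ω, Δ (I ω) ω / w (I ω) ∂μ = ∑' ℓ, ∫ ω, Δ ℓ ω ∂μ := by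
  have hw : ∀ ℓ, μ.real (I ⁻¹' {ℓ}) = w ℓ := fun ℓ => by
    rw [measureReal_def, hI_law, ENNReal.toReal_ofReal (hw_pos ℓ).le]
  have hlevel : ∀ ℓ {f : ℝ → ℝ}, Measurable f →
      ∫ ω in I ⁻¹' {ℓ}, f (Δ ℓ ω) / w ℓ ∂μ = ∫ ω, f (Δ ℓ ω) ∂μ := fun ℓ f hf => by
    rw [← hw]
    exact (hindep.comp measurable_id (measurable_pi_apply ℓ)).setIntegral_preimage_div_measureReal
      hI_meas (hΔ_int ℓ).aemeasurable (measurableSet_singleton ℓ) hf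
      ((hw ℓ).symm ▸ (hw_pos ℓ).ne')
  have hnorm : ∀ ℓ ω, ‖Δ ℓ ω / w ℓ‖ = |Δ ℓ ω| / w ℓ := fun ℓ ω => by
    rw [Real.norm_eq_abs, abs_div, abs_of_pos (hw_pos ℓ)]
  have hint : Integrable (fun ω => Δ (I ω) ω / w (I ω)) μ :=
    integrable_of_summable_integral_norm_preimage_singleton (F := fun ℓ ω => Δ ℓ ω / w ℓ) hI_meas
      (fun ℓ => ((hΔ_int ℓ).div_const _).integrableOn)
      (hsum.congr fun ℓ => by simp only [hnorm, hlevel ℓ measurable_abs])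
  refine ⟨hint, ?_⟩
  rw [integral_eq_tsum_setIntegral_preimage_singleton (F := fun ℓ ω => Δ ℓ ω / w ℓ) hI_meas hint]
  exact tsum_congr fun ℓ => hlevel ℓ measurable_id

/-- Unbiasedness of the single-term randomized multilevel estimator: if
`Σ_ℓ E[|Δ_ℓ|] < ∞` and `I` is independent of the sequence `(Δ_ℓ)` with
`P(I = ℓ) = w_ℓ > 0`, `Σ w_ℓ = 1`, then `Δ_I / w_I` is integrable and
`E[Δ_I / w_I] = Σ_ℓ E[Δ_ℓ]`. -/
theorem stmt_10 {Ω : Type*} [MeasurableSpace Ω] (μ : Measure Ω)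
    [IsProbabilityMeasure μ]
    (Δ : ℕ → Ω → ℝ) (hΔ_meas : ∀ ℓ, Measurable (Δ ℓ))
    (I : Ω → ℕ) (hI_meas : Measurable I)
    (hindep : IndepFun I (fun ω ℓ => Δ ℓ ω) μ)
    (w : ℕ → ℝ) (hw_pos : ∀ ℓ, 0 < w ℓ) (hw_sum : ∑' ℓ, w ℓ = 1)
    (hI_law : ∀ ℓ, μ (I ⁻¹' {ℓ}) = ENNReal.ofReal (w ℓ))
    (hΔ_int : ∀ ℓ, Integrable (Δ ℓ) μ)
    (hsum : Summable fun ℓ => ∫ ω, |Δ ℓ ω| ∂μ) :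
    Integrable (fun ω => Δ (I ω) ω / w (I ω)) μ ∧
    ∫ ω, Δ (I ω) ω / w (I ω) ∂μ = ∑' ℓ, ∫ ω, Δ ℓ ω ∂μ :=
  stmt_10_general μ Δ I hI_meas hindep w hw_pos hI_law hΔ_int hsum
end

section
/- Let ν be a probability measure on a measurable space Θ, κ a Markov kernel from Θ to a measurable space X, f : X → (0, ∞) measurable, and H : Θ → [0, ∞) measurable. Let (θ, x_1, …, x_M) be jointly distributed random variables such that θ ∼ ν and, for each i = 1, …, M, the conditional law of x_i given θ is κ(θ) (no independence among x_1, …, x_M is assumed). Then E[H(θ)² / ((1/M)·Σ_{i=1}^M f(x_i))²] ≤ E[H(θ)² / f(x)²], where on the right (θ, x) ∼ ν ⊗ κ, and the inequality holds as an inequality in [0, ∞]. -/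
open MeasureTheory ProbabilityTheory
open scoped ProbabilityTheory

/-- Pointwise Jensen/Cauchy–Schwarz bound: for positive `a i`,
`h² / ((1/M)·∑ a i)² ≤ (1/M)·∑ h²/(a i)²`. -/
lemma aux_jensen_sq {M : ℕ} (hM : 1 ≤ M) (h : ℝ) (a : Fin M → ℝ)
    (ha : ∀ i, 0 < a i) :
    h ^ 2 / ((M : ℝ)⁻¹ * ∑ i, a i) ^ 2 ≤ (M : ℝ)⁻¹ * ∑ i, h ^ 2 / (a i) ^ 2 := by
  have hMpos : (0 : ℝ) < M := by exact_mod_cast hM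
  set S : ℝ := ∑ i, a i with hS
  have hSpos : 0 < S := Finset.sum_pos (fun i _ => ha i) ⟨⟨0, hM⟩, Finset.mem_univ _⟩
  -- Cauchy–Schwarz: M² ≤ S * ∑ (a i)⁻¹
  have hCS : (M : ℝ) ^ 2 ≤ S * ∑ i, (a i)⁻¹ := by
    have := Finset.sum_sq_le_sum_mul_sum_of_sq_eq_mul (Finset.univ : Finset (Fin M))
      (r := fun _ => (1 : ℝ)) (f := fun i => a i) (g := fun i => (a i)⁻¹)
      (fun i _ => (ha i).le) (fun i _ => (inv_nonneg.2 (ha i).le))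
      (fun i _ => by rw [one_pow, mul_inv_cancel₀ (ha i).ne'])
    simpa using this
  -- Chebyshev: (∑ (a i)⁻¹)² ≤ M * ∑ (a i)⁻²
  have hCheb : (∑ i, (a i)⁻¹) ^ 2 ≤ (M : ℝ) * ∑ i, ((a i)⁻¹) ^ 2 := by
    simpa using sq_sum_le_card_mul_sum_sq
      (s := (Finset.univ : Finset (Fin M))) (f := fun i => (a i)⁻¹)
  have hinv_nonneg : 0 ≤ ∑ i, (a i)⁻¹ :=
    Finset.sum_nonneg fun i _ => (inv_nonneg.2 (ha i).le)
  -- M³ ≤ S² * ∑ (a i)⁻²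
  have key : (M : ℝ) ^ 3 ≤ S ^ 2 * ∑ i, ((a i)⁻¹) ^ 2 := by
    have h1 : ((M : ℝ) ^ 2) ^ 2 ≤ (S * ∑ i, (a i)⁻¹) ^ 2 := by
      apply pow_le_pow_left₀ (by positivity) hCS
    have h2 : (S * ∑ i, (a i)⁻¹) ^ 2 = S ^ 2 * (∑ i, (a i)⁻¹) ^ 2 := by ring
    have h3 : S ^ 2 * (∑ i, (a i)⁻¹) ^ 2 ≤ S ^ 2 * ((M : ℝ) * ∑ i, ((a i)⁻¹) ^ 2) := by
      apply mul_le_mul_of_nonneg_left hCheb (by positivity)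
    nlinarith [sq_nonneg S, mul_pos hSpos hSpos]
  have hmean : (M : ℝ) ^ 2 / S ^ 2 ≤ (M : ℝ)⁻¹ * ∑ i, ((a i)⁻¹) ^ 2 := by
    rw [div_le_iff₀ (by positivity)]
    rw [inv_mul_eq_div, div_mul_eq_mul_div, le_div_iff₀ hMpos]
    nlinarith
  have hLHS : h ^ 2 / ((M : ℝ)⁻¹ * S) ^ 2 = h ^ 2 * ((M : ℝ) ^ 2 / S ^ 2) := by
    field_simp
  have hRHS : (M : ℝ)⁻¹ * ∑ i, h ^ 2 / (a i) ^ 2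
      = h ^ 2 * ((M : ℝ)⁻¹ * ∑ i, ((a i)⁻¹) ^ 2) := by
    have he : ∀ i : Fin M, h ^ 2 / (a i) ^ 2 = h ^ 2 * ((a i)⁻¹) ^ 2 := fun i => by
      rw [inv_pow, div_eq_mul_inv]
    simp_rw [he, ← Finset.mul_sum]
    ring
  calc h ^ 2 / ((M : ℝ)⁻¹ * S) ^ 2 = h ^ 2 * ((M : ℝ) ^ 2 / S ^ 2) := hLHS
    _ ≤ h ^ 2 * ((M : ℝ)⁻¹ * ∑ i, ((a i)⁻¹) ^ 2) :=
        mul_le_mul_of_nonneg_left hmean (sq_nonneg h)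
    _ = (M : ℝ)⁻¹ * ∑ i, h ^ 2 / (a i) ^ 2 := hRHS.symm

/-- Jensen bound for non-independent (e.g. RQMC) inner samples: if `θ ∼ ν`
and each `x_i` has conditional law `κ(θ)` given `θ` (i.e. the joint law of
`(θ, x_i)` is `ν ⊗ₘ κ`), no independence assumed, then
`E[H(θ)²/((1/M)·Σ f(x_i))²] ≤ E[H(θ)²/f(x)²]` in `[0, ∞]`. -/
theorem stmt_18 {Ω Θ 𝒳 : Type*} [MeasurableSpace Ω] [MeasurableSpace Θ]
    [MeasurableSpace 𝒳]
    (μ : Measure Ω) [IsProbabilityMeasure μ]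
    (ν : Measure Θ) [IsProbabilityMeasure ν]
    (κ : ProbabilityTheory.Kernel Θ 𝒳) [IsMarkovKernel κ]
    (f : 𝒳 → ℝ) (hf_meas : Measurable f) (hf_pos : ∀ x, 0 < f x)
    (H : Θ → ℝ) (hH_meas : Measurable H) (hH_nonneg : ∀ θ, 0 ≤ H θ)
    (M : ℕ) (hM : 1 ≤ M)
    (T : Ω → Θ) (hT : Measurable T)
    (X : Fin M → Ω → 𝒳) (hX : ∀ i, Measurable (X i))
    (hT_law : Measure.map T μ = ν)
    (hjoint : ∀ i, Measure.map (fun ω => (T ω, X i ω)) μ = ν ⊗ₘ κ) :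
    ∫⁻ ω, ENNReal.ofReal (H (T ω) ^ 2 / ((M : ℝ)⁻¹ * ∑ i, f (X i ω)) ^ 2) ∂μ
      ≤ ∫⁻ z : Θ × 𝒳, ENNReal.ofReal (H z.1 ^ 2 / f z.2 ^ 2) ∂(ν ⊗ₘ κ) := by
  have hg_meas : Measurable fun z : Θ × 𝒳 => ENNReal.ofReal (H z.1 ^ 2 / f z.2 ^ 2) := by
    apply ENNReal.measurable_ofReal.comp
    exact ((hH_meas.comp measurable_fst).pow_const 2).div
      ((hf_meas.comp measurable_snd).pow_const 2)
  -- pointwise bound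
  have hpt : ∀ ω, ENNReal.ofReal (H (T ω) ^ 2 / ((M : ℝ)⁻¹ * ∑ i, f (X i ω)) ^ 2)
      ≤ (M : ENNReal)⁻¹ * ∑ i, ENNReal.ofReal (H (T ω) ^ 2 / f (X i ω) ^ 2) := by
    intro ω
    have h1 := aux_jensen_sq hM (H (T ω)) (fun i => f (X i ω)) (fun i => hf_pos _)
    calc ENNReal.ofReal (H (T ω) ^ 2 / ((M : ℝ)⁻¹ * ∑ i, f (X i ω)) ^ 2)
        ≤ ENNReal.ofReal ((M : ℝ)⁻¹ * ∑ i, H (T ω) ^ 2 / f (X i ω) ^ 2) :=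
          ENNReal.ofReal_le_ofReal h1
      _ = ENNReal.ofReal ((M : ℝ)⁻¹) * ENNReal.ofReal (∑ i, H (T ω) ^ 2 / f (X i ω) ^ 2) :=
          ENNReal.ofReal_mul (by positivity)
      _ = (M : ENNReal)⁻¹ * ∑ i, ENNReal.ofReal (H (T ω) ^ 2 / f (X i ω) ^ 2) := by
          rw [ENNReal.ofReal_sum_of_nonneg (fun i _ => by positivity),
            ENNReal.ofReal_inv_of_pos (by exact_mod_cast hM)]
          norm_num
  calc ∫⁻ ω, ENNReal.ofReal (H (T ω) ^ 2 / ((M : ℝ)⁻¹ * ∑ i, f (X i ω)) ^ 2) ∂μ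
      ≤ ∫⁻ ω, (M : ENNReal)⁻¹ * ∑ i, ENNReal.ofReal (H (T ω) ^ 2 / f (X i ω) ^ 2) ∂μ :=
        lintegral_mono hpt
    _ = (M : ENNReal)⁻¹ * ∑ i, ∫⁻ ω, ENNReal.ofReal (H (T ω) ^ 2 / f (X i ω) ^ 2) ∂μ := by
        rw [lintegral_const_mul _ (by
          apply Finset.measurable_sum
          intro i _
          exact ENNReal.measurable_ofReal.comp
            (((hH_meas.comp hT).pow_const 2).div ((hf_meas.comp (hX i)).pow_const 2))),
          lintegral_finset_sum]
        intro i _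
        exact ENNReal.measurable_ofReal.comp
          (((hH_meas.comp hT).pow_const 2).div ((hf_meas.comp (hX i)).pow_const 2))
    _ = (M : ENNReal)⁻¹ * ∑ _i : Fin M,
          ∫⁻ z : Θ × 𝒳, ENNReal.ofReal (H z.1 ^ 2 / f z.2 ^ 2) ∂(ν ⊗ₘ κ) := by
        congr 1
        apply Finset.sum_congr rfl
        intro i _
        rw [← hjoint i, lintegral_map hg_meas (hT.prodMk (hX i))]
    _ = ∫⁻ z : Θ × 𝒳, ENNReal.ofReal (H z.1 ^ 2 / f z.2 ^ 2) ∂(ν ⊗ₘ κ) := by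
        rw [Finset.sum_const, Finset.card_univ, Fintype.card_fin, nsmul_eq_mul,
          ← mul_assoc, ENNReal.inv_mul_cancel (Nat.cast_ne_zero.mpr (by omega)) (by simp),
          one_mul]
end
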